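/- arXiv:0904.0299 — 2 statements merged into one kernel-verified Lean document; each statement's English description precedes it below -/
import Mathlib

section
/- Let n > m ≥ 1 be integers, H ≥ 0 a real number, and let w : ℝ → ℝ be a twice differentiable positive function satisfying the ordinary differential equation w″(s) = w(s)·[ (n−m)(w(s)^{−n}+H)^{(2−m)/m}/(m·w(s)ⁿ) − H(w(s)^{−n}+H)^{(2−m)/m} − 1 ] for all s. Then the function s ↦ (w′(s))² + w(s)²(w(s)^{−n}+H)^{2/m} + w(s)² is constant on ℝ, and this constant is positive. -/
open Real

/-! Multiplying the ODE by `2 w'` shows that it is the conservative equation `2 w'' = -V'(w)` for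
the potential `V(x) = x² (x^{-n} + H)^{2/m} + x²`, so the energy `(w')² + V(w)` is constant; it is
positive because `w > 0`. -/

theorem sq_deriv_add_comp_eq_of_ode {w w' w'' V dV : ℝ → ℝ}
    (hw1 : ∀ s, HasDerivAt w (w' s) s) (hw2 : ∀ s, HasDerivAt w' (w'' s) s)
    (hV : ∀ s, HasDerivAt V (dV s) (w s)) (hode : ∀ s, 2 * w'' s = -dV s) (s t : ℝ) :
    w' s ^ 2 + V (w s) = w' t ^ 2 + V (w t) := by
  have hE : ∀ s, HasDerivAt (fun s => w' s ^ 2 + V (w s)) 0 s := fun s => by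
    refine (((hw2 s).pow 2).add ((hV s).comp s (hw1 s))).congr_deriv ?_
    linear_combination w' s * hode s
  exact is_const_of_deriv_eq_zero (fun s => (hE s).differentiableAt) (fun s => (hE s).deriv) s t

theorem hasDerivAt_sq_mul_rpow_neg_add_rpow {x : ℝ} (hx : 0 < x) {n H : ℝ}
    (hu : 0 < x ^ (-n) + H) (p : ℝ) :
    HasDerivAt (fun y => y ^ 2 * (y ^ (-n) + H) ^ p)
      (x * (2 * (x ^ (-n) + H) ^ p - p * n * x ^ (-n) * (x ^ (-n) + H) ^ (p - 1))) x := by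
  refine ((hasDerivAt_pow 2 x).mul
    (((hasDerivAt_rpow_const (p := -n) (Or.inl hx.ne')).add_const H).rpow_const
      (p := p) (Or.inl hu.ne'))).congr_deriv ?_
  rw [rpow_sub_one hx.ne', rpow_sub_one hu.ne']
  field_simp
  ring

theorem hasDerivAt_potential {x : ℝ} (hx : 0 < x) {n m H : ℝ} (hm : m ≠ 0)
    (hu : 0 < x ^ (-n) + H) :
    HasDerivAt (fun y => y ^ 2 * (y ^ (-n) + H) ^ (2 / m) + y ^ 2)
      (-2 * (x * ((n - m) * (x ^ (-n) + H) ^ ((2 - m) / m) / (m * x ^ n)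
        - H * (x ^ (-n) + H) ^ ((2 - m) / m) - 1))) x := by
  refine ((hasDerivAt_sq_mul_rpow_neg_add_rpow hx hu (2 / m)).add
    (hasDerivAt_pow 2 x)).congr_deriv ?_
  rw [sub_div, div_self hm, rpow_sub_one hu.ne', ← inv_inv (x ^ n), ← rpow_neg hx.le]
  generalize (x ^ (-n) + H) ^ (2 / m) = U
  generalize x ^ (-n) = P at hu ⊢
  field_simp
  ring

theorem first_integral_of_ode_general (n m : ℕ) (hm : 1 ≤ m) (H : ℝ) (hH : 0 ≤ H)
    (w w' w'' : ℝ → ℝ) (hw : ∀ s, 0 < w s)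
    (hw1 : ∀ s, HasDerivAt w (w' s) s) (hw2 : ∀ s, HasDerivAt w' (w'' s) s)
    (hode : ∀ s, w'' s = w s *
      (((n : ℝ) - m) * (w s ^ (-(n : ℝ)) + H) ^ (((2 : ℝ) - m) / m) / (m * w s ^ (n : ℝ))
        - H * (w s ^ (-(n : ℝ)) + H) ^ (((2 : ℝ) - m) / m) - 1)) :
    ∃ c : ℝ, 0 < c ∧ ∀ s : ℝ,
      (w' s) ^ 2 + (w s) ^ 2 * (w s ^ (-(n : ℝ)) + H) ^ ((2 : ℝ) / m) + (w s) ^ 2 = c := by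
  have hu : ∀ s, 0 < w s ^ (-(n : ℝ)) + H := fun s => by positivity [hw s]
  have hV := fun s => hasDerivAt_potential (hw s) (m := m) (Nat.cast_ne_zero.mpr (by omega)) (hu s)
  refine ⟨w' 0 ^ 2 + (w 0 ^ 2 * (w 0 ^ (-(n : ℝ)) + H) ^ ((2 : ℝ) / m) + w 0 ^ 2),
    by positivity [hw 0, hu 0], fun s => ?_⟩
  refine (add_assoc _ _ _).trans (sq_deriv_add_comp_eq_of_ode hw1 hw2 hV (fun s => ?_) s 0)
  rw [hode s]
  ring

/-- First integral (3.23) of the ODE (3.17)/(3.22): for a positive twice differentiable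
solution `w` of the second-order ODE, the quantity
`(w')² + w²(w^{-n}+H)^{2/m} + w²` is a positive constant. -/
theorem first_integral_of_ode (n m : ℕ) (hm : 1 ≤ m) (hmn : m < n) (H : ℝ) (hH : 0 ≤ H)
    (w w' w'' : ℝ → ℝ) (hw : ∀ s, 0 < w s)
    (hw1 : ∀ s, HasDerivAt w (w' s) s) (hw2 : ∀ s, HasDerivAt w' (w'' s) s)
    (hode : ∀ s, w'' s = w s *
      (((n : ℝ) - m) * (w s ^ (-(n : ℝ)) + H) ^ (((2 : ℝ) - m) / m) / (m * w s ^ (n : ℝ))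
        - H * (w s ^ (-(n : ℝ)) + H) ^ (((2 : ℝ) - m) / m) - 1)) :
    ∃ c : ℝ, 0 < c ∧ ∀ s : ℝ,
      (w' s) ^ 2 + (w s) ^ 2 * (w s ^ (-(n : ℝ)) + H) ^ ((2 : ℝ) / m) + (w s) ^ 2 = c :=
  first_integral_of_ode_general n m hm H hH w w' w'' hw hw1 hw2 hode
end

section
/- For every real number h > 0, the improper integral ∫₀^{1/√(1+h²)} t·h / ((1−t²)·√(1−(1+h²)t²)) dt converges and equals arctan(1/h). -/
/-!
Writing `s(t) = √(1 - (1 + h²) t²)`, one has `1 + (s/h)² = (1 + h²)(1 - t²)/h²`, so the integrand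
is the derivative of `-arctan (s(t)/h)`. It is nonnegative, hence integrable up to the singular
endpoint `1/√(1 + h²)` where `s` vanishes, and the integral is `arctan (1/h) - arctan 0`.
-/

open Real Set Filter MeasureTheory

theorem intervalIntegrable_and_integral_eq_sub_of_deriv_nonneg {f f' : ℝ → ℝ} {a b : ℝ}
    (hab : a ≤ b) (hcont : ContinuousOn f (Icc a b))
    (hderiv : ∀ x ∈ Ioo a b, HasDerivAt f (f' x) x) (hpos : ∀ x ∈ Ioo a b, 0 ≤ f' x) :
    IntervalIntegrable f' volume a b ∧ ∫ x in a..b, f' x = f b - f a := by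
  have hint : IntervalIntegrable f' volume a b :=
    (intervalIntegrable_iff_integrableOn_Ioc_of_le hab).2
      (intervalIntegral.integrableOn_deriv_of_nonneg hcont hderiv hpos)
  exact ⟨hint, intervalIntegral.integral_eq_sub_of_hasDerivAt_of_le hab hcont hderiv hint⟩

theorem one_sub_mul_sq_pos_of_lt_one_div_sqrt {c t : ℝ} (hc : 0 < c) (ht₀ : 0 ≤ t)
    (ht : t < 1 / √c) : 0 < 1 - c * t ^ 2 := by
  have hsc : 0 < √c := sqrt_pos.2 hc
  have hlt : t * √c < 1 := (lt_div_iff₀ hsc).1 ht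
  have hsq : (t * √c) ^ 2 = c * t ^ 2 := by rw [mul_pow, sq_sqrt hc.le, mul_comm]
  nlinarith [mul_nonneg ht₀ hsc.le]

theorem one_sub_sq_pos_of_one_sub_mul_sq_pos {h t : ℝ} (ht : 0 < 1 - (1 + h ^ 2) * t ^ 2) :
    0 < 1 - t ^ 2 := by
  nlinarith [mul_nonneg (sq_nonneg h) (sq_nonneg t)]

noncomputable def periodPrimitive (h t : ℝ) : ℝ :=
  -arctan (√(1 - (1 + h ^ 2) * t ^ 2) / h)

theorem continuous_periodPrimitive (h : ℝ) : Continuous (periodPrimitive h) := by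
  unfold periodPrimitive
  fun_prop

theorem periodPrimitive_zero (h : ℝ) : periodPrimitive h 0 = -arctan (1 / h) := by
  simp [periodPrimitive]

theorem periodPrimitive_one_div_sqrt (h : ℝ) : periodPrimitive h (1 / √(1 + h ^ 2)) = 0 := by
  have hc : 0 < 1 + h ^ 2 := by positivity
  simp [periodPrimitive, sq_sqrt hc.le, hc.ne']

theorem hasDerivAt_periodPrimitive {h t : ℝ} (hh : h ≠ 0) (ht : 0 < 1 - (1 + h ^ 2) * t ^ 2) :
    HasDerivAt (periodPrimitive h)
      (t * h / ((1 - t ^ 2) * √(1 - (1 + h ^ 2) * t ^ 2))) t := by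
  have hq : HasDerivAt (fun t : ℝ => 1 - (1 + h ^ 2) * t ^ 2) (-((1 + h ^ 2) * (2 * t))) t := by
    simpa using ((hasDerivAt_pow 2 t).const_mul (1 + h ^ 2)).const_sub 1
  refine (((hq.sqrt ht.ne').div_const h).arctan).neg.congr_deriv ?_
  have h1t : 1 - t ^ 2 ≠ 0 := (one_sub_sq_pos_of_one_sub_mul_sq_pos ht).ne'
  set s := √(1 - (1 + h ^ 2) * t ^ 2)
  have hs0 : s ≠ 0 := (sqrt_pos.2 ht).ne'
  have hs2 : s ^ 2 = 1 - (1 + h ^ 2) * t ^ 2 := sq_sqrt ht.le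
  have hden : 1 + (s / h) ^ 2 = (1 + h ^ 2) * (1 - t ^ 2) / h ^ 2 := by
    field_simp
    linarith
  rw [hden]
  field_simp

/-- Evaluation (5.13) of the limiting period integral: for `h > 0`,
`∫₀^{1/√(1+h²)} t h / ((1-t²)√(1-(1+h²)t²)) dt` converges and equals `arctan(1/h)`. -/
theorem limiting_period_integral (h : ℝ) (hh : 0 < h) :
    IntervalIntegrable
      (fun t : ℝ => t * h / ((1 - t ^ 2) * Real.sqrt (1 - (1 + h ^ 2) * t ^ 2)))
      MeasureTheory.volume 0 (1 / Real.sqrt (1 + h ^ 2)) ∧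
    ∫ t in (0 : ℝ)..(1 / Real.sqrt (1 + h ^ 2)),
        t * h / ((1 - t ^ 2) * Real.sqrt (1 - (1 + h ^ 2) * t ^ 2)) =
      Real.arctan (1 / h) := by
  have hinside : ∀ t ∈ Ioo 0 (1 / √(1 + h ^ 2)), 0 < 1 - (1 + h ^ 2) * t ^ 2 :=
    fun t ht => one_sub_mul_sq_pos_of_lt_one_div_sqrt (by positivity) ht.1.le ht.2
  have hnonneg : ∀ t ∈ Ioo 0 (1 / √(1 + h ^ 2)),
      0 ≤ t * h / ((1 - t ^ 2) * √(1 - (1 + h ^ 2) * t ^ 2)) := fun t ht => by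
    have := one_sub_sq_pos_of_one_sub_mul_sq_pos (hinside t ht)
    have := ht.1
    positivity
  obtain ⟨hint, hval⟩ := intervalIntegrable_and_integral_eq_sub_of_deriv_nonneg
    (by positivity) (continuous_periodPrimitive h).continuousOn
    (fun t ht => hasDerivAt_periodPrimitive hh.ne' (hinside t ht)) hnonneg
  refine ⟨hint, hval.trans ?_⟩
  rw [periodPrimitive_one_div_sqrt, periodPrimitive_zero, zero_sub, neg_neg]
end
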